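/- Fix n ≥ 0 and let g be the real Lie algebra with basis {X_{4k+1}, X_{4k+2}, X_{4k+3}, X_{4k+4} : 0 ≤ k ≤ n} ∪ {Z_1, Z_2} whose only nonzero brackets among basis elements are [X_{4k+1}, X_{4k+3}] = −Z_1/2, [X_{4k+1}, X_{4k+4}] = −Z_2/2, [X_{4k+2}, X_{4k+3}] = −Z_2/2, [X_{4k+2}, X_{4k+4}] = Z_1/2. In g_ℂ set W = (Z_1 + iZ_2)/2, W̄ = (Z_1 − iZ_2)/2, T_{2k+1} = (X_{4k+1} − iX_{4k+2})/2, T_{2k+2} = (X_{4k+3} + iX_{4k+4})/2, and their conjugates T̄_{2k+1} = (X_{4k+1} + iX_{4k+2})/2, T̄_{2k+2} = (X_{4k+3} − iX_{4k+4})/2; these form a ℂ-basis of g_ℂ. Let ρ̄ : g_ℂ → ℂ be the functional with ρ̄(W̄) = 1 and ρ̄ = 0 on all other basis elements. Then the kernel of the map span_ℂ{T_1, …, T_{2n+2}} → Hom_ℂ(g_ℂ, ℂ) sending T to the functional X ↦ ρ̄([T, X]) is exactly span_ℂ{T_2, T_4, …, T_{2n+2}}. -/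
import Mathlib


/-! **Statement 13.** In the complexification of the algebra `W_{4n+6}` of Example 3,
the kernel of `T ↦ ι_T dρ̄` on the span of the `(1,0)`-vectors
`T_1, …, T_{2n+2}` is exactly the span of `T_2, T_4, …, T_{2n+2}`. -/

namespace ExampleThreeComplex

noncomputable section

/-- The complexification `g_ℂ` of the algebra of Example 3: for each `0 ≤ k ≤ n`
the four complex coordinates of `X_{4k+1}, …, X_{4k+4}`, plus those of `Z_1, Z_2`. -/
abbrev Gc (n : ℕ) := (Fin (n + 1) → ℂ × ℂ × ℂ × ℂ) × ℂ × ℂ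

/-- The standard basis of `ℂ × ℂ × ℂ × ℂ`. -/
def e : Fin 4 → ℂ × ℂ × ℂ × ℂ := ![(1, 0, 0, 0), (0, 1, 0, 0), (0, 0, 1, 0), (0, 0, 0, 1)]

/-- The basis vector `X_{4k+1+i}` (for `i : Fin 4`). -/
def X {n : ℕ} (k : Fin (n + 1)) (i : Fin 4) : Gc n := (Pi.single k (e i), 0, 0)

/-- The basis vector `Z_1`. -/
def Z1 {n : ℕ} : Gc n := (0, 1, 0)

/-- The basis vector `Z_2`. -/
def Z2 {n : ℕ} : Gc n := (0, 0, 1)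

/-- Coefficients of `Z_1` in the brackets `[X_{4k+1+i}, X_{4k+1+j}]`. -/
def c : Matrix (Fin 4) (Fin 4) ℂ :=
  !![0, 0, -(1 / 2), 0; 0, 0, 0, 1 / 2; 1 / 2, 0, 0, 0; 0, -(1 / 2), 0, 0]

/-- Coefficients of `Z_2` in the brackets `[X_{4k+1+i}, X_{4k+1+j}]`. -/
def d : Matrix (Fin 4) (Fin 4) ℂ :=
  !![0, 0, 0, -(1 / 2); 0, 0, -(1 / 2), 0; 0, 1 / 2, 0, 0; 1 / 2, 0, 0, 0]

/-- `W = (Z_1 + iZ_2)/2`. -/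
def W {n : ℕ} : Gc n := (0, 1 / 2, Complex.I / 2)
/-- `W̄ = (Z_1 - iZ_2)/2`. -/
def Wb {n : ℕ} : Gc n := (0, 1 / 2, -(Complex.I / 2))
/-- `T_{2k+1} = (X_{4k+1} - iX_{4k+2})/2`. -/
def Todd {n : ℕ} (k : Fin (n + 1)) : Gc n :=
  (Pi.single k (1 / 2, -(Complex.I / 2), 0, 0), 0, 0)
/-- `T_{2k+2} = (X_{4k+3} + iX_{4k+4})/2`. -/
def Teven {n : ℕ} (k : Fin (n + 1)) : Gc n :=
  (Pi.single k (0, 0, 1 / 2, Complex.I / 2), 0, 0)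
/-- `T̄_{2k+1} = (X_{4k+1} + iX_{4k+2})/2`. -/
def Tbodd {n : ℕ} (k : Fin (n + 1)) : Gc n :=
  (Pi.single k (1 / 2, Complex.I / 2, 0, 0), 0, 0)
/-- `T̄_{2k+2} = (X_{4k+3} - iX_{4k+4})/2`. -/
def Tbeven {n : ℕ} (k : Fin (n + 1)) : Gc n :=
  (Pi.single k (0, 0, 1 / 2, -(Complex.I / 2)), 0, 0)

lemma Z1_eq {n : ℕ} : (Z1 : Gc n) = W + Wb := by
  simp [Z1, W, Wb, Prod.ext_iff]; ring

lemma Z2_eq {n : ℕ} : (Z2 : Gc n) = Complex.I • Wb - Complex.I • W := by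
  simp [Z2, W, Wb, Prod.ext_iff, Complex.ext_iff]; ring_nf

lemma Todd_eq {n : ℕ} (k : Fin (n+1)) :
    Todd (n := n) k = (1/2 : ℂ) • X k 0 + (-(Complex.I/2)) • X k 1 := by
  simp only [Todd, X, e, Prod.ext_iff, Prod.smul_mk, Prod.mk_add_mk, smul_zero, add_zero,
    ← Pi.single_smul, ← Pi.single_add]
  simp [Prod.ext_iff]

lemma Teven_eq {n : ℕ} (k : Fin (n+1)) :
    Teven (n := n) k = (1/2 : ℂ) • X k 2 + (Complex.I/2) • X k 3 := by
  simp only [Teven, X, e, Prod.ext_iff, Prod.smul_mk, Prod.mk_add_mk, smul_zero, add_zero,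
    ← Pi.single_smul, ← Pi.single_add]
  simp [Prod.ext_iff]

lemma eval_zero {n : ℕ} (L : Gc n →ₗ[ℂ] ℂ) (hX : ∀ k i, L (X k i) = 0)
    (h1 : L Z1 = 0) (h2 : L Z2 = 0) : ∀ v, L v = 0 := by
  rintro ⟨f, a, b⟩
  have hdec : (⟨f, a, b⟩ : Gc n) =
      (∑ k : Fin (n+1), ((f k).1 • X k 0 + (f k).2.1 • X k 1 + (f k).2.2.1 • X k 2 +
        (f k).2.2.2 • X k 3)) + a • Z1 + b • Z2 := by
    have hk : ∀ k : Fin (n+1), ((f k).1 • X k 0 + (f k).2.1 • X k 1 + (f k).2.2.1 • X k 2 +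
        (f k).2.2.2 • X k 3 : Gc n) = (Pi.single k (f k), 0, 0) := by
      intro k
      simp only [X, Prod.smul_mk, Prod.mk_add_mk, smul_zero, add_zero, ← Pi.single_smul,
        ← Pi.single_add]
      refine Prod.ext ?_ rfl
      congr 1
      simp [e, Prod.ext_iff]
    simp only [hk]
    have hsum : (∑ k : Fin (n+1), ((Pi.single k (f k), 0, 0) : Gc n)) = (f, 0, 0) := by
      simp [Prod.ext_iff, Prod.fst_sum, Prod.snd_sum, Finset.univ_sum_single]
    rw [hsum]
    simp [Z1, Z2, Prod.ext_iff]
  rw [hdec]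
  simp [hX, h1, h2]


/-- Let `B` be the ℂ-bilinear extension of the bracket of Example 3 to `g_ℂ`, and let
`ρ̄ : g_ℂ → ℂ` be the functional with `ρ̄ W̄ = 1` and `ρ̄ = 0` on the other elements of
the ℂ-basis `{W, W̄, T_j, T̄_j}`.  Then the kernel of the map
`span_ℂ {T_1, …, T_{2n+2}} → Hom_ℂ(g_ℂ, ℂ)`, `T ↦ (X ↦ ρ̄ ⁅T, X⁆)`, is exactly
`span_ℂ {T_2, T_4, …, T_{2n+2}}`. -/
theorem kernel_of_contraction
    (n : ℕ)
    (B : Gc n →ₗ[ℂ] Gc n →ₗ[ℂ] Gc n)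
    (hXX : ∀ (k l : Fin (n + 1)) (i j : Fin 4),
      B (X k i) (X l j) = if k = l then c i j • Z1 + d i j • Z2 else 0)
    (hZ1 : ∀ (k : Fin (n + 1)) (i : Fin 4), B (X k i) Z1 = 0 ∧ B Z1 (X k i) = 0)
    (hZ2 : ∀ (k : Fin (n + 1)) (i : Fin 4), B (X k i) Z2 = 0 ∧ B Z2 (X k i) = 0)
    (hZZ : B (Z1 : Gc n) Z1 = 0 ∧ B (Z1 : Gc n) Z2 = 0 ∧ B (Z2 : Gc n) Z1 = 0 ∧
      B (Z2 : Gc n) Z2 = 0)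
    (ρb : Gc n →ₗ[ℂ] ℂ)
    (hρbWb : ρb Wb = 1) (hρbW : ρb W = 0)
    (hρbT : ∀ k, ρb (Todd k) = 0 ∧ ρb (Teven k) = 0 ∧ ρb (Tbodd k) = 0 ∧
      ρb (Tbeven k) = 0) :
    {u : Gc n | u ∈ Submodule.span ℂ (Set.range (Todd (n := n)) ∪ Set.range Teven) ∧
        ∀ X : Gc n, ρb (B u X) = 0} =
      (Submodule.span ℂ (Set.range (Teven (n := n))) : Set (Gc n)) := by
  have hz1 : ρb (Z1 : Gc n) = 1 := by rw [Z1_eq, map_add, hρbW, hρbWb]; ring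
  have hz2 : ρb (Z2 : Gc n) = Complex.I := by
    rw [Z2_eq, map_sub, map_smul, map_smul, hρbW, hρbWb]; simp
  -- value of ρb on basic brackets
  have hbXX : ∀ (k l : Fin (n + 1)) (i j : Fin 4),
      ρb (B (X k i) (X l j)) = if k = l then c i j + d i j * Complex.I else 0 := by
    intro k l i j
    rw [hXX]
    split
    · rw [map_add, map_smul, map_smul, hz1, hz2, smul_eq_mul, smul_eq_mul]; ring
    · simp
  -- ρb ∘ B (Teven k) = 0
  have hevenKill : ∀ (k : Fin (n + 1)) (v : Gc n), ρb (B (Teven k) v) = 0 := by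
    intro k
    refine eval_zero (ρb ∘ₗ B (Teven k)) ?_ ?_ ?_
    · intro l j
      simp only [LinearMap.comp_apply, Teven_eq, map_add, map_smul, LinearMap.add_apply,
        LinearMap.smul_apply, hbXX, smul_eq_mul]
      split
      · fin_cases j <;>
          simp [c, d, Matrix.vecHead, Matrix.vecTail] <;>
          ring_nf <;>
          simp [Complex.I_sq] <;>
          ring
      · ring
    · simp only [LinearMap.comp_apply, Teven_eq, map_add, map_smul, LinearMap.add_apply,
        LinearMap.smul_apply, (hZ1 k 2).1, (hZ1 k 3).1]
      simp
    · simp only [LinearMap.comp_apply, Teven_eq, map_add, map_smul, LinearMap.add_apply,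
        LinearMap.smul_apply, (hZ2 k 2).1, (hZ2 k 3).1]
      simp
  -- the coefficient functionals
  set Lk : Fin (n + 1) → (Gc n →ₗ[ℂ] ℂ) := fun k => ρb ∘ₗ B.flip (X k 2) with hLk
  have hLkapp : ∀ k v, Lk k v = ρb (B v (X k 2)) := fun k v => rfl
  have hLkOdd : ∀ k l, Lk k (Todd l) = if l = k then -(1/2) else 0 := by
    intro k l
    rw [hLkapp]
    simp only [Todd_eq, map_add, map_smul, LinearMap.add_apply, LinearMap.smul_apply, hbXX,
      smul_eq_mul]
    split
    · simp [c, d, Matrix.vecHead, Matrix.vecTail]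
      ring_nf
      simp [Complex.I_sq]
      ring
    · ring
  have hLkEven : ∀ k l, Lk k (Teven l) = 0 := fun k l => hevenKill l _
  -- the projection onto the span of the `Todd`s
  set P : Gc n →ₗ[ℂ] Gc n :=
    ∑ k : Fin (n + 1), ((-2 : ℂ) • Lk k).smulRight (Todd k) with hP
  have hPapp : ∀ v, P v = ∑ k : Fin (n + 1), (-2 * Lk k v) • Todd k := by
    intro v
    simp [hP, LinearMap.sum_apply, LinearMap.smulRight_apply]
  have hPOdd : ∀ l, P (Todd l) = Todd l := by
    intro l
    rw [hPapp]
    simp [hLkOdd, ite_smul, mul_ite, Finset.sum_ite_eq]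
  have hPEven : ∀ l, P (Teven l) = 0 := by
    intro l
    rw [hPapp]
    simp [hLkEven]
  have hkey : Submodule.span ℂ (Set.range (Todd (n := n)) ∪ Set.range Teven) ≤
      (Submodule.span ℂ (Set.range (Teven (n := n)))).comap (LinearMap.id - P) := by
    rw [Submodule.span_le]
    rintro _ (⟨l, rfl⟩ | ⟨l, rfl⟩) <;>
      simp only [SetLike.mem_coe, Submodule.mem_comap, LinearMap.sub_apply, LinearMap.id_apply,
        hPOdd, hPEven, sub_self, sub_zero]
    · exact Submodule.zero_mem _
    · exact Submodule.subset_span ⟨l, rfl⟩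
  ext u
  constructor
  · rintro ⟨hu, h0⟩
    have hPu : P u = 0 := by
      rw [hPapp]
      have : ∀ k, Lk k u = 0 := fun k => h0 _
      simp [this]
    have := hkey hu
    rw [Submodule.mem_comap, LinearMap.sub_apply, LinearMap.id_apply, hPu, sub_zero] at this
    exact this
  · intro hu
    refine ⟨Submodule.span_mono Set.subset_union_right hu, ?_⟩
    intro v
    induction hu using Submodule.span_induction with
    | mem x hx => obtain ⟨l, rfl⟩ := hx; exact hevenKill l v
    | zero => simp
    | add x y _ _ hx hy => simp [map_add, hx, hy]
    | smul a x _ hx => simp [map_smul, hx]
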